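/- arXiv:2510.20163 — 3 statements merged into one kernel-verified Lean document; each statement's English description precedes it below -/
import Mathlib

section
/- Let k ≥ 1 be an integer and let Y be a random variable with the chi-squared distribution χ²_k. Then for every t with 0 < t < 1 one has P(|Y/k − 1| ≥ t) ≤ 2·exp(−k t²/8), and for every t ≥ 1 one has P(|Y/k − 1| ≥ t) ≤ 2·exp(−k t/8). -/
/-!
χ²_k is the Gamma(k/2, 1/2) law, whose Laplace transform `∫ e^{sx} = (1 - 2s)^{-k/2}` is explicit,
so the exponential Markov inequality applies. At the optimal tilt `s = t / (2(1 + t))` it bounds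
the upper tail `P(Y ≥ k(1 + t))` by `exp(-(k/2)(t - log(1 + t)))`, and symmetrically the lower tail
`P(Y ≤ k(1 - t))` by `exp(-(k/2)(-t - log(1 - t)))`. The elementary estimates
`log(1 + t) ≤ t - t²/4` and `log(1 - t) ≤ -t - t²/4` for `t ≤ 1`, and `log(1 + t) ≤ 3t/4` for
`t ≥ 1`, turn these rates into `k t²/8` and `k t/8`; for `t ≥ 1` the lower tail is null since
`Y ≥ 0`.
-/

open MeasureTheory ProbabilityTheory Matrix Filter
open scoped ProbabilityTheory ENNReal

noncomputable def chiSqMeasure (k : ℕ) : MeasureTheory.Measure ℝ :=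
  MeasureTheory.volume.withDensity fun x =>
    ENNReal.ofReal (if 0 < x then
      ((2 : ℝ) ^ ((k : ℝ) / 2) * Real.Gamma ((k : ℝ) / 2))⁻¹ *
        x ^ ((k : ℝ) / 2 - 1) * Real.exp (-x / 2)
    else 0)

open Real Set

lemma le_of_le_of_hasDerivAt_le {f g f' g' : ℝ → ℝ} {a b : ℝ} (hab : a ≤ b)
    (hf : ∀ x ∈ Icc a b, HasDerivAt f (f' x) x) (hg : ∀ x ∈ Icc a b, HasDerivAt g (g' x) x)
    (ha : f a ≤ g a) (hf'g' : ∀ x ∈ Ico a b, f' x ≤ g' x) : f b ≤ g b :=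
  image_le_of_deriv_right_le_deriv_boundary
    (fun x hx => (hf x hx).continuousAt.continuousWithinAt)
    (fun x hx => (hf x (Ico_subset_Icc_self hx)).hasDerivWithinAt) ha
    (fun x hx => (hg x hx).continuousAt.continuousWithinAt)
    (fun x hx => (hg x (Ico_subset_Icc_self hx)).hasDerivWithinAt) hf'g' (right_mem_Icc.2 hab)

lemma hasDerivAt_log_one_add {x : ℝ} (hx : -1 < x) :
    HasDerivAt (fun y => log (1 + y)) (1 / (1 + x)) x := by
  simpa using ((hasDerivAt_id x).const_add 1).log (by simp; linarith)

lemma Real.log_one_add_le_sub_sq_div_four {t : ℝ} (ht₀ : 0 ≤ t) (ht₁ : t ≤ 1) :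
    log (1 + t) ≤ t - t ^ 2 / 4 := by
  refine le_of_le_of_hasDerivAt_le (g := fun x => x - x ^ 2 / 4) (f' := fun x => 1 / (1 + x))
    (g' := fun x => 1 - x / 2) ht₀
    (fun x hx => hasDerivAt_log_one_add (by linarith [hx.1])) (fun x _ => ?_) (by simp)
    (fun x hx => ?_)
  · exact ((hasDerivAt_id' x).sub ((hasDerivAt_pow 2 x).div_const 4)).congr_deriv (by ring)
  · have : 0 < 1 + x := by linarith [hx.1]
    rw [div_le_iff₀ this]
    nlinarith [hx.1, hx.2]

lemma Real.log_one_sub_le_neg_sub_sq_div_four {t : ℝ} (ht₀ : 0 ≤ t) (ht₁ : t < 1) :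
    log (1 - t) ≤ -t - t ^ 2 / 4 := by
  refine le_of_le_of_hasDerivAt_le (f := fun x => log (1 - x)) (g := fun x => -x - x ^ 2 / 4)
    (f' := fun x => -(1 / (1 - x))) (g' := fun x => -1 - x / 2) ht₀
    (fun x hx => ?_) (fun x _ => ?_) (by simp) (fun x hx => ?_)
  · simpa [neg_div] using ((hasDerivAt_id x).const_sub 1).log (by simp; linarith [hx.2])
  · exact ((hasDerivAt_neg' x).sub ((hasDerivAt_pow 2 x).div_const 4)).congr_deriv (by ring)
  · have : 0 < 1 - x := by linarith [hx.2]
    rw [neg_le, neg_sub', le_div_iff₀ this]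
    nlinarith [hx.1, hx.2]

lemma Real.log_one_add_le_three_mul_div_four {t : ℝ} (ht : 1 ≤ t) :
    log (1 + t) ≤ 3 * t / 4 := by
  refine le_of_le_of_hasDerivAt_le (g := fun x => 3 * x / 4) (f' := fun x => 1 / (1 + x))
    (g' := fun _ => 3 / 4) ht
    (fun x hx => hasDerivAt_log_one_add (by linarith [hx.1])) (fun x _ => ?_) ?_
    (fun x hx => ?_)
  · simpa using ((hasDerivAt_id x).const_mul 3).div_const 4
  · norm_num; linarith [log_two_lt_d9]
  · rw [div_le_div_iff₀ (by linarith [hx.1]) (by norm_num)]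
    linarith [hx.1]

lemma measure_le_mul_le_exp_neg_mul_lintegral_exp (μ : Measure ℝ) (s ε : ℝ) :
    μ {x | ε ≤ s * x} ≤ ENNReal.ofReal (exp (-ε)) * ∫⁻ x, ENNReal.ofReal (exp (s * x)) ∂μ := by
  have hsub : {x | ε ≤ s * x} ⊆ {x | ENNReal.ofReal (exp ε) ≤ ENNReal.ofReal (exp (s * x))} :=
    fun x hx => ENNReal.ofReal_le_ofReal (exp_le_exp.2 hx)
  refine (measure_mono hsub).trans ((meas_ge_le_lintegral_div (by fun_prop)
    (by simp [exp_pos]) ENNReal.ofReal_ne_top).trans_eq ?_)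
  rw [div_eq_mul_inv, mul_comm, ← ENNReal.ofReal_inv_of_pos (exp_pos ε), exp_neg]

lemma gammaPDF_mul_exp {a r s : ℝ} (hr : 0 ≤ r) (hs : s < r) (x : ℝ) :
    gammaPDF a r x * ENNReal.ofReal (exp (s * x)) =
      ENNReal.ofReal ((r / (r - s)) ^ a) * gammaPDF a (r - s) x := by
  rcases lt_or_ge x 0 with hx | hx
  · simp [gammaPDF_of_neg hx]
  have hrs : 0 < r - s := by linarith
  rw [gammaPDF_of_nonneg hx, gammaPDF_of_nonneg hx, ← ENNReal.ofReal_mul' (exp_pos _).le,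
    ← ENNReal.ofReal_mul (rpow_nonneg (div_nonneg hr hrs.le) a)]
  congr 1
  rw [div_rpow hr hrs.le]
  field_simp
  rw [mul_assoc, ← exp_add]
  ring_nf

lemma lintegral_exp_mul_gammaMeasure {a r s : ℝ} (ha : 0 < a) (hr : 0 ≤ r) (hs : s < r) :
    ∫⁻ x, ENNReal.ofReal (exp (s * x)) ∂gammaMeasure a r = ENNReal.ofReal ((r / (r - s)) ^ a) := by
  rw [gammaMeasure, lintegral_withDensity_eq_lintegral_mul _
    (by exact (measurable_gammaPDFReal a r).ennreal_ofReal) (by fun_prop)]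
  simp only [Pi.mul_apply, gammaPDF_mul_exp hr hs]
  rw [lintegral_const_mul' _ _ ENNReal.ofReal_ne_top,
    lintegral_gammaPDF_eq_one ha (by linarith), mul_one]

lemma gammaMeasure_Iic_zero (a r : ℝ) : gammaMeasure a r (Iic 0) = 0 := by
  rw [gammaMeasure, withDensity_apply _ measurableSet_Iic, setLIntegral_congr Iio_ae_eq_Iic.symm,
    lintegral_gammaPDF_of_nonpos le_rfl]

lemma gammaMeasure_upper_tail_le {a r t : ℝ} (ha : 0 < a) (hr : 0 < r) (ht : 0 ≤ t) :
    gammaMeasure a r {x | a / r * (1 + t) ≤ x} ≤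
      ENNReal.ofReal (exp (-(a * (t - log (1 + t))))) := by
  have ht' : 0 < 1 + t := by linarith
  set s := r * t / (1 + t) with hs
  have hs_nonneg : 0 ≤ s := by positivity
  have hs_lt : s < r := by rw [hs, div_lt_iff₀ ht']; linarith
  have hsr : r / (r - s) = 1 + t := by rw [hs]; field_simp; ring
  have hsub : {x | a / r * (1 + t) ≤ x} ⊆ {x | a * t ≤ s * x} := fun x hx => by
    calc a * t = s * (a / r * (1 + t)) := by rw [hs]; field_simp
      _ ≤ s * x := mul_le_mul_of_nonneg_left hx hs_nonneg
  calc gammaMeasure a r {x | a / r * (1 + t) ≤ x}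
      ≤ ENNReal.ofReal (exp (-(a * t))) * ∫⁻ x, ENNReal.ofReal (exp (s * x)) ∂gammaMeasure a r :=
        (measure_mono hsub).trans (measure_le_mul_le_exp_neg_mul_lintegral_exp _ _ _)
    _ = ENNReal.ofReal (exp (-(a * (t - log (1 + t))))) := by
      rw [lintegral_exp_mul_gammaMeasure ha hr.le hs_lt,
        hsr, ← ENNReal.ofReal_mul (exp_pos _).le, rpow_def_of_pos ht', ← exp_add]
      ring_nf

lemma gammaMeasure_lower_tail_le {a r t : ℝ} (ha : 0 < a) (hr : 0 < r) (ht₀ : 0 ≤ t)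
    (ht₁ : t < 1) :
    gammaMeasure a r {x | x ≤ a / r * (1 - t)} ≤
      ENNReal.ofReal (exp (-(a * (-t - log (1 - t))))) := by
  have ht' : 0 < 1 - t := by linarith
  set s := r * t / (1 - t) with hs
  have hs_nonneg : 0 ≤ s := by positivity
  have hsr : r / (r - -s) = 1 - t := by rw [hs]; field_simp; ring
  have hsub : {x | x ≤ a / r * (1 - t)} ⊆ {x | -(a * t) ≤ -s * x} := fun x hx => by
    calc -(a * t) = -s * (a / r * (1 - t)) := by rw [hs]; field_simp
      _ ≤ -s * x := mul_le_mul_of_nonpos_left hx (neg_nonpos.2 hs_nonneg)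
  calc gammaMeasure a r {x | x ≤ a / r * (1 - t)}
      ≤ ENNReal.ofReal (exp (-(-(a * t)))) *
          ∫⁻ x, ENNReal.ofReal (exp (-s * x)) ∂gammaMeasure a r :=
        (measure_mono hsub).trans (measure_le_mul_le_exp_neg_mul_lintegral_exp _ _ _)
    _ = ENNReal.ofReal (exp (-(a * (-t - log (1 - t))))) := by
      rw [lintegral_exp_mul_gammaMeasure ha hr.le (by linarith), hsr,
        ← ENNReal.ofReal_mul (exp_pos _).le, rpow_def_of_pos ht', ← exp_add]
      ring_nf

lemma chiSqMeasure_eq_gammaMeasure (k : ℕ) : chiSqMeasure k = gammaMeasure (k / 2) (1 / 2) := by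
  refine withDensity_congr_ae ?_
  filter_upwards [compl_mem_ae_iff.2 (volume_singleton (a := (0 : ℝ)))] with x hx
  rcases lt_or_gt_of_ne (show x ≠ 0 from hx) with hx | hx
  · simp [gammaPDF_of_neg hx, hx.not_gt]
  rw [if_pos hx, gammaPDF_of_nonneg hx.le, one_div, inv_rpow zero_le_two, mul_inv, div_eq_mul_inv]
  congr 3
  ring

section ChiSq

variable {k : ℕ} {t : ℝ}

lemma chiSqMeasure_upper_tail_le (hk : 0 < k) (ht : 0 ≤ t) :
    chiSqMeasure k {x | k * (1 + t) ≤ x} ≤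
      ENNReal.ofReal (exp (-(k / 2 * (t - log (1 + t))))) := by
  have h := gammaMeasure_upper_tail_le (a := k / 2) (by positivity) one_half_pos ht
  rwa [show (k : ℝ) / 2 / (1 / 2) = k by ring, ← chiSqMeasure_eq_gammaMeasure] at h

lemma chiSqMeasure_lower_tail_le (hk : 0 < k) (ht₀ : 0 ≤ t) (ht₁ : t < 1) :
    chiSqMeasure k {x | x ≤ k * (1 - t)} ≤
      ENNReal.ofReal (exp (-(k / 2 * (-t - log (1 - t))))) := by
  have h := gammaMeasure_lower_tail_le (a := k / 2) (by positivity) one_half_pos ht₀ ht₁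
  rwa [show (k : ℝ) / 2 / (1 / 2) = k by ring, ← chiSqMeasure_eq_gammaMeasure] at h

lemma chiSqMeasure_lower_tail_eq_zero (ht : 1 ≤ t) :
    chiSqMeasure k {x | x ≤ k * (1 - t)} = 0 :=
  measure_mono_null
    (fun x (hx : x ≤ k * (1 - t)) => show x ≤ 0 by nlinarith [k.cast_nonneg (α := ℝ)])
    (chiSqMeasure_eq_gammaMeasure k ▸ gammaMeasure_Iic_zero _ _)

end ChiSq

lemma setOf_le_abs_div_sub_one_subset {m t : ℝ} (hm : 0 < m) :
    {x : ℝ | t ≤ |x / m - 1|} ⊆ {x | m * (1 + t) ≤ x} ∪ {x | x ≤ m * (1 - t)} := by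
  intro x (hx : t ≤ |x / m - 1|)
  rcases le_abs'.1 hx with h | h
  · right
    rw [mem_ofPred_eq, ← div_le_iff₀' hm]
    linarith
  · left
    rw [mem_ofPred_eq, ← le_div_iff₀' hm]
    linarith

lemma measure_le_abs_div_sub_one_le {Ω : Type*} [MeasurableSpace Ω] (P : Measure Ω) {Y : Ω → ℝ}
    (hY : Measurable Y) {m : ℝ} (hm : 0 < m) (t : ℝ) :
    P {ω | t ≤ |Y ω / m - 1|} ≤ P.map Y {x | m * (1 + t) ≤ x} + P.map Y {x | x ≤ m * (1 - t)} := by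
  change P (Y ⁻¹' {x | t ≤ |x / m - 1|}) ≤ _
  rw [← Measure.map_apply hY (measurableSet_le measurable_const (by fun_prop))]
  exact (measure_mono (setOf_le_abs_div_sub_one_subset hm)).trans (measure_union_le _ _)

theorem chiSq_concentration_general
    {Ω : Type*} [MeasureSpace Ω]
    (k : ℕ) (hk : 1 ≤ k) (Y : Ω → ℝ) (hY : Measurable Y)
    (hlaw : Measure.map Y ℙ = chiSqMeasure k) :
    (∀ t : ℝ, 0 < t → t < 1 →
      ℙ {ω | t ≤ |Y ω / (k : ℝ) - 1|} ≤
        ENNReal.ofReal (2 * Real.exp (-(k : ℝ) * t ^ 2 / 8))) ∧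
    (∀ t : ℝ, 1 ≤ t →
      ℙ {ω | t ≤ |Y ω / (k : ℝ) - 1|} ≤
        ENNReal.ofReal (2 * Real.exp (-(k : ℝ) * t / 8))) := by
  have hk₀ : (0 : ℝ) ≤ k := k.cast_nonneg
  have two_tails (t : ℝ) := hlaw ▸ measure_le_abs_div_sub_one_le ℙ hY (Nat.cast_pos.2 hk) t
  refine ⟨fun t ht₀ ht₁ => ?_, fun t ht => ?_⟩
  · calc _ ≤ _ := two_tails t
      _ ≤ ENNReal.ofReal (exp (-k * t ^ 2 / 8)) + ENNReal.ofReal (exp (-k * t ^ 2 / 8)) := by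
        gcongr
        · refine (chiSqMeasure_upper_tail_le hk ht₀.le).trans (by
            gcongr; nlinarith [log_one_add_le_sub_sq_div_four ht₀.le ht₁.le, hk₀])
        · refine (chiSqMeasure_lower_tail_le hk ht₀.le ht₁).trans (by
            gcongr; nlinarith [log_one_sub_le_neg_sub_sq_div_four ht₀.le ht₁, hk₀])
      _ = ENNReal.ofReal (2 * exp (-k * t ^ 2 / 8)) := by
        rw [← ENNReal.ofReal_add (exp_pos _).le (exp_pos _).le, two_mul]
  · calc _ ≤ _ := two_tails t
      _ ≤ ENNReal.ofReal (exp (-(k / 2 * (t - log (1 + t))))) := by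
        rw [chiSqMeasure_lower_tail_eq_zero ht, add_zero]
        exact chiSqMeasure_upper_tail_le hk (by linarith)
      _ ≤ ENNReal.ofReal (2 * exp (-k * t / 8)) := by
        have hexp : -(k / 2 * (t - log (1 + t))) ≤ -k * t / 8 := by
          nlinarith [log_one_add_le_three_mul_div_four ht, hk₀]
        gcongr
        linarith [exp_le_exp.2 hexp, exp_pos (-k * t / 8)]

/-- Concentration of a chi-squared random variable around its mean. -/
theorem chiSq_concentration
    {Ω : Type*} [MeasureSpace Ω] [IsProbabilityMeasure (ℙ : Measure Ω)]
    (k : ℕ) (hk : 1 ≤ k) (Y : Ω → ℝ) (hY : Measurable Y)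
    (hlaw : Measure.map Y ℙ = chiSqMeasure k) :
    (∀ t : ℝ, 0 < t → t < 1 →
      ℙ {ω | t ≤ |Y ω / (k : ℝ) - 1|} ≤
        ENNReal.ofReal (2 * Real.exp (-(k : ℝ) * t ^ 2 / 8))) ∧
    (∀ t : ℝ, 1 ≤ t →
      ℙ {ω | t ≤ |Y ω / (k : ℝ) - 1|} ≤
        ENNReal.ofReal (2 * Real.exp (-(k : ℝ) * t / 8))) :=
  chiSq_concentration_general k hk Y hY hlaw
end

section
/- (Gauss–Markov theorem) Let n ≥ q ≥ 1, let 𝔵 ∈ ℝ^{n×q} be a deterministic matrix of full column rank, β ∈ ℝ^q, σ > 0, and let e be a random vector in ℝ^n with E[e] = 0 and covariance matrix cov(e) = σ²·Id_n. Set Y = 𝔵β + e and let β̂ = (𝔵ᵀ𝔵)^{−1}𝔵ᵀY be the ordinary least squares estimator. Then E[β̂] = β and cov(β̂) = σ²·(𝔵ᵀ𝔵)^{−1}; moreover, for every matrix C ∈ ℝ^{q×n} such that the linear estimator β̄ = CY is unbiased for every β ∈ ℝ^q (equivalently C𝔵 = Id_q), the matrix cov(β̄) − cov(β̂) is positive semidefinite.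 -/
/-!
Each estimator is `M *ᵥ (A *ᵥ β + e)` for a fixed matrix `M`, so its mean is `M * A *ᵥ β`
and its covariance is `M * cov(e) * Mᵀ = σ² • (M * Mᵀ)`. For `B = (AᵀA)⁻¹Aᵀ` one has `B * A = 1`
and `B * Bᵀ = (AᵀA)⁻¹`; an unbiased `C` satisfies `C * A = 1`, hence `C * Bᵀ = (AᵀA)⁻¹` as well,
and therefore `C * Cᵀ - B * Bᵀ = (C - B) * (C - B)ᵀ`, which is positive semidefinite.
-/

open MeasureTheory ProbabilityTheory Matrix Filter
open scoped ProbabilityTheory ENNReal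

/-- Covariance matrix of a random vector, cov(V)ᵢⱼ = E[VᵢVⱼ] - E[Vᵢ]E[Vⱼ]. -/
noncomputable def covMatrix {Ω : Type*} [MeasureSpace Ω] {q : ℕ}
    (V : Ω → Fin q → ℝ) : Matrix (Fin q) (Fin q) ℝ :=
  Matrix.of fun i j => (∫ ω, V ω i * V ω j) - (∫ ω, V ω i) * (∫ ω, V ω j)

theorem Matrix.isUnit_of_rank_eq_card {K n : Type*} [Field K] [Fintype n] [DecidableEq n]
    {M : Matrix n n K} (h : M.rank = Fintype.card n) : IsUnit M := by
  rw [← mulVec_surjective_iff_isUnit, ← coe_mulVecLin, ← LinearMap.range_eq_top]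
  apply Submodule.eq_top_of_finrank_eq
  rw [← rank, h, Module.finrank_fintype_fun_eq_card]

section LeastSquares

variable {R m n : Type*} [Fintype m] [Fintype n] [DecidableEq n]

noncomputable def olsMatrix [CommRing R] (A : Matrix m n R) : Matrix n m R :=
  (Aᵀ * A)⁻¹ * Aᵀ

theorem isUnit_det_transpose_mul_self_of_rank_eq_card [Field R] [LinearOrder R]
    [IsStrictOrderedRing R] {A : Matrix m n R} (h : A.rank = Fintype.card n) :
    IsUnit (Aᵀ * A).det :=
  (isUnit_iff_isUnit_det _).mp (isUnit_of_rank_eq_card (by rw [rank_transpose_mul_self, h]))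

variable [CommRing R] {A : Matrix m n R}

theorem olsMatrix_mul_self (hA : IsUnit (Aᵀ * A).det) : olsMatrix A * A = 1 := by
  rw [olsMatrix, Matrix.mul_assoc, nonsing_inv_mul _ hA]

theorem mul_transpose_olsMatrix {C : Matrix n m R} (hCA : C * A = 1) :
    C * (olsMatrix A)ᵀ = (Aᵀ * A)⁻¹ := by
  rw [olsMatrix, transpose_mul, transpose_transpose, transpose_nonsing_inv, transpose_mul,
    transpose_transpose, ← Matrix.mul_assoc, hCA, Matrix.one_mul]

theorem olsMatrix_mul_transpose_self (hA : IsUnit (Aᵀ * A).det) :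
    olsMatrix A * (olsMatrix A)ᵀ = (Aᵀ * A)⁻¹ :=
  mul_transpose_olsMatrix (olsMatrix_mul_self hA)

theorem mul_transpose_self_sub_olsMatrix (hA : IsUnit (Aᵀ * A).det) {C : Matrix n m R}
    (hCA : C * A = 1) :
    C * Cᵀ - olsMatrix A * (olsMatrix A)ᵀ = (C - olsMatrix A) * (C - olsMatrix A)ᵀ := by
  have hBC : olsMatrix A * Cᵀ = (Aᵀ * A)⁻¹ := by
    rw [← transpose_transpose (olsMatrix A), ← transpose_mul, mul_transpose_olsMatrix hCA,
      transpose_nonsing_inv, transpose_mul, transpose_transpose]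
  rw [transpose_sub, Matrix.sub_mul, Matrix.mul_sub, Matrix.mul_sub, mul_transpose_olsMatrix hCA,
    hBC, olsMatrix_mul_transpose_self hA]
  abel

theorem posSemidef_mul_transpose_self_sub_olsMatrix [PartialOrder R] [StarRing R] [TrivialStar R]
    [StarOrderedRing R] (hA : IsUnit (Aᵀ * A).det) {C : Matrix n m R} (hCA : C * A = 1) :
    (C * Cᵀ - olsMatrix A * (olsMatrix A)ᵀ).PosSemidef := by
  rw [mul_transpose_self_sub_olsMatrix hA hCA, ← conjTranspose_eq_transpose_of_trivial]
  exact posSemidef_self_mul_conjTranspose _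

end LeastSquares

section Moments

variable {Ω : Type*} [MeasureSpace Ω] {n : ℕ} {V : Ω → Fin n → ℝ}

theorem integral_mulVec_apply {ι : Type*} (hV : ∀ k, Integrable (fun ω => V ω k))
    (M : Matrix ι (Fin n) ℝ) (i : ι) :
    ∫ ω, (M *ᵥ V ω) i = (M *ᵥ fun k => ∫ ω, V ω k) i := by
  simp only [mulVec, dotProduct]
  rw [integral_finsetSum _ fun k _ => (hV k).const_mul _]
  simp only [integral_const_mul]

theorem covMatrix_mulVec {q : ℕ} (hV : ∀ k, Integrable (fun ω => V ω k))
    (hVV : ∀ k l, Integrable (fun ω => V ω k * V ω l)) (M : Matrix (Fin q) (Fin n) ℝ) :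
    covMatrix (fun ω => M *ᵥ V ω) = M * covMatrix V * Mᵀ := by
  ext i j
  have hprod : ∀ ω, (M *ᵥ V ω) i * (M *ᵥ V ω) j
      = ∑ k, ∑ l, M i k * M j l * (V ω k * V ω l) := fun ω => by
    simp only [mulVec, dotProduct, Finset.sum_mul_sum]
    exact Finset.sum_congr rfl fun k _ => Finset.sum_congr rfl fun l _ => by ring
  have hint : ∫ ω, (M *ᵥ V ω) i * (M *ᵥ V ω) j
      = ∑ k, ∑ l, M i k * M j l * ∫ ω, V ω k * V ω l := by
    simp only [hprod]
    rw [integral_finsetSum _ fun k _ => integrable_finsetSum _ fun l _ => (hVV k l).const_mul _]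
    refine Finset.sum_congr rfl fun k _ => ?_
    rw [integral_finsetSum _ fun l _ => (hVV k l).const_mul _]
    simp only [integral_const_mul]
  have hrhs : (M * covMatrix V * Mᵀ) i j = ∑ k, ∑ l, M i k * M j l * covMatrix V k l := by
    simp only [mul_apply, transpose_apply, Finset.sum_mul]
    rw [Finset.sum_comm]
    exact Finset.sum_congr rfl fun k _ => Finset.sum_congr rfl fun l _ => by ring
  simp only [covMatrix, of_apply] at hrhs ⊢
  rw [hint, hrhs, integral_mulVec_apply hV, integral_mulVec_apply hV]
  simp only [mulVec, dotProduct, Finset.sum_mul_sum, ← Finset.sum_sub_distrib]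
  exact Finset.sum_congr rfl fun k _ => Finset.sum_congr rfl fun l _ => by ring

variable [IsProbabilityMeasure (ℙ : Measure Ω)]

theorem integrable_const_add_mul_const_add (hV : ∀ k, Integrable (fun ω => V ω k))
    (hVV : ∀ k l, Integrable (fun ω => V ω k * V ω l)) (c : Fin n → ℝ) (k l : Fin n) :
    Integrable (fun ω => (c + V ω) k * (c + V ω) l) := by
  simp only [Pi.add_apply, add_mul, mul_add]
  exact ((integrable_const _).add ((hV k).mul_const _)).add (((hV l).const_mul _).add (hVV k l))

theorem covMatrix_const_add (hV : ∀ k, Integrable (fun ω => V ω k))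
    (hVV : ∀ k l, Integrable (fun ω => V ω k * V ω l)) (c : Fin n → ℝ) :
    covMatrix (fun ω => c + V ω) = covMatrix V := by
  ext k l
  simp only [covMatrix, of_apply, Pi.add_apply, add_mul, mul_add]
  have := hV k
  have := hV l
  have := hVV k l
  rw [integral_add (by fun_prop) (by fun_prop), integral_add (by fun_prop) (by fun_prop),
    integral_add (by fun_prop) (by fun_prop), integral_add (by fun_prop) (by fun_prop),
    integral_add (by fun_prop) (by fun_prop)]
  simp only [integral_const, integral_const_mul, integral_mul_const, probReal_univ, one_smul]
  ring

theorem integral_mulVec_const_add_apply {ι : Type*} (hV : ∀ k, Integrable (fun ω => V ω k))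
    (hmean : ∀ k, ∫ ω, V ω k = 0) (M : Matrix ι (Fin n) ℝ) (c : Fin n → ℝ) (i : ι) :
    ∫ ω, (M *ᵥ (c + V ω)) i = (M *ᵥ c) i := by
  rw [integral_mulVec_apply (V := fun ω => c + V ω) fun k => (integrable_const _).add (hV k)]
  congr
  funext k
  simp only [Pi.add_apply]
  rw [integral_add (integrable_const _) (hV k), hmean, integral_const, probReal_univ, one_smul,
    add_zero]

theorem covMatrix_mulVec_const_add {q : ℕ} (hV : ∀ k, Integrable (fun ω => V ω k))
    (hVV : ∀ k l, Integrable (fun ω => V ω k * V ω l)) (M : Matrix (Fin q) (Fin n) ℝ)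
    (c : Fin n → ℝ) :
    covMatrix (fun ω => M *ᵥ (c + V ω)) = M * covMatrix V * Mᵀ := by
  rw [covMatrix_mulVec (V := fun ω => c + V ω) (fun k => (integrable_const _).add (hV k))
    (integrable_const_add_mul_const_add hV hVV c), covMatrix_const_add hV hVV]

end Moments

theorem gauss_markov_general
    {Ω : Type*} [MeasureSpace Ω] [IsProbabilityMeasure (ℙ : Measure Ω)]
    (n q : ℕ)
    (A : Matrix (Fin n) (Fin q) ℝ) (hrank : A.rank = q)
    (β : Fin q → ℝ) (σ : ℝ)
    (e : Ω → Fin n → ℝ)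
    (hint1 : ∀ i, Integrable (fun ω => e ω i) ℙ)
    (hint2 : ∀ i j, Integrable (fun ω => e ω i * e ω j) ℙ)
    (hmean : ∀ i, (∫ ω, e ω i ∂ℙ) = 0)
    (hcov : covMatrix e = σ ^ 2 • (1 : Matrix (Fin n) (Fin n) ℝ)) :
    (∀ i, (∫ ω, (((Aᵀ * A)⁻¹ * Aᵀ) *ᵥ (A *ᵥ β + e ω)) i ∂ℙ) = β i) ∧
    covMatrix (fun ω => ((Aᵀ * A)⁻¹ * Aᵀ) *ᵥ (A *ᵥ β + e ω)) = σ ^ 2 • (Aᵀ * A)⁻¹ ∧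
    ∀ C : Matrix (Fin q) (Fin n) ℝ,
      (∀ β' : Fin q → ℝ, ∀ i, (∫ ω, (C *ᵥ (A *ᵥ β' + e ω)) i ∂ℙ) = β' i) →
      (covMatrix (fun ω => C *ᵥ (A *ᵥ β + e ω)) -
        covMatrix (fun ω => ((Aᵀ * A)⁻¹ * Aᵀ) *ᵥ (A *ᵥ β + e ω))).PosSemidef := by
  rw [show (Aᵀ * A)⁻¹ * Aᵀ = olsMatrix A from rfl]
  have hA : IsUnit (Aᵀ * A).det :=
    isUnit_det_transpose_mul_self_of_rank_eq_card (by rwa [Fintype.card_fin])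
  have hcov_mulVec (M : Matrix (Fin q) (Fin n) ℝ) (c : Fin n → ℝ) :
      covMatrix (fun ω => M *ᵥ (c + e ω)) = σ ^ 2 • (M * Mᵀ) := by
    rw [covMatrix_mulVec_const_add hint1 hint2, hcov, Matrix.mul_smul, Matrix.mul_one,
      Matrix.smul_mul]
  refine ⟨fun i => ?_, by rw [hcov_mulVec, olsMatrix_mul_transpose_self hA], fun C hC => ?_⟩
  · rw [integral_mulVec_const_add_apply hint1 hmean, mulVec_mulVec, olsMatrix_mul_self hA,
      one_mulVec]
  · have hCA : C * A = 1 := mulVec_injective <| funext fun v => funext fun i => by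
      rw [← mulVec_mulVec, ← integral_mulVec_const_add_apply hint1 hmean, hC, one_mulVec]
    rw [hcov_mulVec, hcov_mulVec, ← smul_sub]
    exact (posSemidef_mul_transpose_self_sub_olsMatrix hA hCA).smul (sq_nonneg σ)

/-- Gauss–Markov theorem: the OLS estimator is unbiased with covariance
σ²(AᵀA)⁻¹, and any unbiased linear estimator has covariance at least as large
(in the positive semidefinite order). -/
theorem gauss_markov
    {Ω : Type*} [MeasureSpace Ω] [IsProbabilityMeasure (ℙ : Measure Ω)]
    (n q : ℕ) (hq : 1 ≤ q) (hnq : q ≤ n)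
    (A : Matrix (Fin n) (Fin q) ℝ) (hrank : A.rank = q)
    (β : Fin q → ℝ) (σ : ℝ) (hσ : 0 < σ)
    (e : Ω → Fin n → ℝ) (hmeas : ∀ i, Measurable fun ω => e ω i)
    (hint1 : ∀ i, Integrable (fun ω => e ω i) ℙ)
    (hint2 : ∀ i j, Integrable (fun ω => e ω i * e ω j) ℙ)
    (hmean : ∀ i, (∫ ω, e ω i ∂ℙ) = 0)
    (hcov : covMatrix e = σ ^ 2 • (1 : Matrix (Fin n) (Fin n) ℝ)) :
    (∀ i, (∫ ω, (((Aᵀ * A)⁻¹ * Aᵀ) *ᵥ (A *ᵥ β + e ω)) i ∂ℙ) = β i) ∧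
    covMatrix (fun ω => ((Aᵀ * A)⁻¹ * Aᵀ) *ᵥ (A *ᵥ β + e ω)) = σ ^ 2 • (Aᵀ * A)⁻¹ ∧
    ∀ C : Matrix (Fin q) (Fin n) ℝ,
      (∀ β' : Fin q → ℝ, ∀ i, (∫ ω, (C *ᵥ (A *ᵥ β' + e ω)) i ∂ℙ) = β' i) →
      (covMatrix (fun ω => C *ᵥ (A *ᵥ β + e ω)) -
        covMatrix (fun ω => ((Aᵀ * A)⁻¹ * Aᵀ) *ᵥ (A *ᵥ β + e ω))).PosSemidef :=
  gauss_markov_general n q A hrank β σ e hint1 hint2 hmean hcov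
end

section
/- (Deterministic LASSO prediction bound under the restricted eigenvalue condition) Let n, p ≥ 1, let 𝔵 ∈ ℝ^{n×p}, β ∈ ℝ^p, e ∈ ℝ^n, and set y = 𝔵β + e. Let S = { j : β_j ≠ 0 } and s = #S. Let λ > 0 satisfy (2/n)·‖𝔵ᵀe‖_∞ ≤ λ, and suppose there is κ > 0 such that (1/n)·‖𝔵v‖² ≥ κ·‖v‖² for every v ∈ ℝ^p with ‖v_{S^c}‖₁ ≤ 3‖v_S‖₁. Let β̂ be any minimizer over b ∈ ℝ^p of the LASSO objective (1/(2n))·‖y − 𝔵b‖² + λ‖b‖₁. Then (1/n)·‖𝔵β̂ − 𝔵β‖² ≤ 9λ²s/κ. -/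
open MeasureTheory ProbabilityTheory Matrix Filter
open scoped ProbabilityTheory ENNReal

/-- Deterministic LASSO prediction bound under the restricted eigenvalue
condition. -/
theorem lasso_prediction_bound
    (n p : ℕ) (hn : 1 ≤ n) (hp : 1 ≤ p)
    (A : Matrix (Fin n) (Fin p) ℝ) (β : Fin p → ℝ) (e : Fin n → ℝ)
    (lam κ : ℝ) (hlam : 0 < lam) (hκ : 0 < κ)
    (hinfty : ∀ j, 2 / (n : ℝ) * |(Aᵀ *ᵥ e) j| ≤ lam)
    (hRE : ∀ v : Fin p → ℝ,
      (∑ j ∈ Finset.univ.filter (fun j => β j = 0), |v j|) ≤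
          3 * (∑ j ∈ Finset.univ.filter (fun j => β j ≠ 0), |v j|) →
        κ * (∑ j, v j ^ 2) ≤ 1 / (n : ℝ) * (∑ i, ((A *ᵥ v) i) ^ 2))
    (βhat : Fin p → ℝ)
    (hmin : ∀ b : Fin p → ℝ,
      1 / (2 * (n : ℝ)) * (∑ i, ((A *ᵥ β + e) i - (A *ᵥ βhat) i) ^ 2) +
          lam * (∑ j, |βhat j|) ≤
        1 / (2 * (n : ℝ)) * (∑ i, ((A *ᵥ β + e) i - (A *ᵥ b) i) ^ 2) +
          lam * (∑ j, |b j|)) :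
    1 / (n : ℝ) * (∑ i, ((A *ᵥ βhat) i - (A *ᵥ β) i) ^ 2) ≤
      9 * lam ^ 2 * ((Finset.univ.filter (fun j => β j ≠ 0)).card : ℝ) / κ := by
  have hn0 : (0:ℝ) < n := by exact_mod_cast hn
  set v : Fin p → ℝ := fun j => βhat j - β j with hv
  set S := Finset.univ.filter (fun j => β j ≠ 0) with hS
  set Sc := Finset.univ.filter (fun j => β j = 0) with hSc
  set a := ∑ j ∈ S, |v j| with ha
  set b := ∑ j ∈ Sc, |v j| with hb
  set T := 1 / (n : ℝ) * (∑ i, ((A *ᵥ v) i) ^ 2) with hT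
  have hAv : ∀ i, (A *ᵥ βhat) i - (A *ᵥ β) i = (A *ᵥ v) i := by
    intro i
    simp [hv, Matrix.mulVec, dotProduct, ← Finset.sum_sub_distrib, mul_sub]
  have hgoalT : (1 / (n : ℝ) * (∑ i, ((A *ᵥ βhat) i - (A *ᵥ β) i) ^ 2)) = T := by
    simp [hT, hAv]
  rw [hgoalT]
  have hT0 : 0 ≤ T := by positivity
  have hexp : ∀ i, ((A *ᵥ β + e) i - (A *ᵥ βhat) i) = e i - (A *ᵥ v) i := by
    intro i
    have := hAv i
    simp only [Pi.add_apply]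
    linarith
  have hdot : ∑ i, e i * (A *ᵥ v) i = ∑ j, (Aᵀ *ᵥ e) j * v j := by
    simp only [Matrix.mulVec, dotProduct, Matrix.transpose_apply,
      Finset.sum_mul, Finset.mul_sum]
    rw [Finset.sum_comm]
    congr 1; ext j; congr 1; ext i; ring
  have hstep1 : T ≤ lam * (a + b) + 2 * lam * ((∑ j, |β j|) - ∑ j, |βhat j|) := by
    have h1 := hmin β
    simp only [hexp] at h1
    simp only [Pi.add_apply, add_sub_cancel_left] at h1
    have hsq : ∑ i, (e i - (A *ᵥ v) i) ^ 2 =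
        (∑ i, (e i)^2) - 2 * (∑ i, e i * (A *ᵥ v) i) + ∑ i, ((A *ᵥ v) i)^2 := by
      rw [Finset.mul_sum, ← Finset.sum_sub_distrib, ← Finset.sum_add_distrib]
      exact Finset.sum_congr rfl fun i _ => by ring
    rw [hsq, hdot] at h1
    have hip : ∑ j, (Aᵀ *ᵥ e) j * v j ≤ (n : ℝ) * lam / 2 * (a + b) := by
      have hab : a + b = ∑ j, |v j| := by
        rw [ha, hb, hS, hSc, add_comm]
        exact Finset.sum_filter_add_sum_filter_not _ _ _
      rw [hab, Finset.mul_sum]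
      apply Finset.sum_le_sum
      intro j _
      have h1 : (Aᵀ *ᵥ e) j * v j ≤ |(Aᵀ *ᵥ e) j| * |v j| := by
        calc _ ≤ |(Aᵀ *ᵥ e) j * v j| := le_abs_self _
        _ = _ := abs_mul _ _
      have h2 : |(Aᵀ *ᵥ e) j| ≤ (n:ℝ) * lam / 2 := by
        have := hinfty j
        rw [div_mul_eq_mul_div, div_le_iff₀ hn0] at this
        linarith
      exact h1.trans (mul_le_mul_of_nonneg_right h2 (abs_nonneg _))
    have hdist : ∀ E D Q : ℝ, 1/(2*(n:ℝ)) * (E - 2*D + Q) =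
        1/(2*(n:ℝ))*E - 1/(n:ℝ)*D + (1/(n:ℝ)*Q)/2 := by
      intro E D Q; field_simp
    rw [hdist] at h1
    have hip' : 1 / (n:ℝ) * (∑ j, (Aᵀ *ᵥ e) j * v j) ≤ lam / 2 * (a + b) := by
      calc 1 / (n:ℝ) * (∑ j, (Aᵀ *ᵥ e) j * v j)
          ≤ 1/(n:ℝ) * ((n : ℝ) * lam / 2 * (a + b)) :=
            mul_le_mul_of_nonneg_left hip (by positivity)
        _ = lam / 2 * (a + b) := by field_simp
    rw [hT]
    linarith [h1, hip']
  have hl1 : (∑ j, |β j|) - (∑ j, |βhat j|) ≤ a - b := by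
    have hsplit : ∀ f : Fin p → ℝ, (∑ j, f j) = (∑ j ∈ Sc, f j) + (∑ j ∈ S, f j) := by
      intro f
      rw [hS, hSc]
      exact (Finset.sum_filter_add_sum_filter_not _ _ _).symm
    rw [hsplit (fun j => |β j|), hsplit (fun j => |βhat j|), ha, hb]
    have h1 : ∑ j ∈ Sc, |β j| = 0 := by
      apply Finset.sum_eq_zero
      intro j hj
      rw [hSc, Finset.mem_filter] at hj
      rw [hj.2, abs_zero]
    have h2 : ∀ j ∈ Sc, |v j| = |βhat j| := by
      intro j hj
      rw [hSc, Finset.mem_filter] at hj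
      rw [hv]; simp [hj.2]
    have h3 : ∑ j ∈ S, |β j| - ∑ j ∈ S, |βhat j| ≤ ∑ j ∈ S, |v j| := by
      rw [← Finset.sum_sub_distrib]
      apply Finset.sum_le_sum
      intro j _
      rw [hv]
      calc |β j| - |βhat j| ≤ |β j - βhat j| := abs_sub_abs_le_abs_sub _ _
        _ = |βhat j - β j| := abs_sub_comm _ _
    rw [h1, Finset.sum_congr rfl h2]
    linarith
  have hstep3 : T ≤ lam * (3 * a - b) := by nlinarith [hstep1, hl1, hlam]
  have hcone : b ≤ 3 * a := by nlinarith [hstep3, hT0, hlam]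
  have hREv := hRE v hcone
  have hb0 : 0 ≤ b := Finset.sum_nonneg fun j _ => abs_nonneg _
  have hcs : a ^ 2 ≤ (S.card : ℝ) * ∑ j, v j ^ 2 := by
    have h1 : (∑ j ∈ S, |v j|) ^ 2 ≤ (S.card : ℝ) * ∑ j ∈ S, |v j| ^ 2 := by
      exact_mod_cast sq_sum_le_card_mul_sum_sq (s := S) (f := fun j => |v j|)
    have h2 : ∑ j ∈ S, |v j| ^ 2 ≤ ∑ j, v j ^ 2 := by
      calc ∑ j ∈ S, |v j| ^ 2 = ∑ j ∈ S, v j ^ 2 :=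
            Finset.sum_congr rfl fun j _ => sq_abs _
        _ ≤ ∑ j, v j ^ 2 := Finset.sum_le_sum_of_subset_of_nonneg (Finset.subset_univ _)
            (fun j _ _ => sq_nonneg _)
    calc a ^ 2 = (∑ j ∈ S, |v j|) ^ 2 := by rw [ha]
      _ ≤ (S.card : ℝ) * ∑ j ∈ S, |v j| ^ 2 := h1
      _ ≤ (S.card : ℝ) * ∑ j, v j ^ 2 :=
          mul_le_mul_of_nonneg_left h2 (Nat.cast_nonneg _)
  have hTa : T ≤ 3 * lam * a := by nlinarith [hstep3, hb0, hlam.le]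
  have hT2 : T ^ 2 ≤ 9 * lam ^ 2 * (S.card : ℝ) * (T / κ) := by
    have h3a : 0 ≤ 3 * lam * a := le_trans hT0 hTa
    have h1 : T ^ 2 ≤ 9 * lam ^ 2 * a ^ 2 := by
      calc T ^ 2 = T * T := sq T
        _ ≤ (3 * lam * a) * (3 * lam * a) := mul_le_mul hTa hTa hT0 h3a
        _ = 9 * lam ^ 2 * a ^ 2 := by ring
    have h2 : (∑ j, v j ^ 2) ≤ T / κ := by
      rw [le_div_iff₀ hκ]
      linarith [hREv]
    have hsc : (0:ℝ) ≤ (S.card : ℝ) := Nat.cast_nonneg _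
    calc T ^ 2 ≤ 9 * lam ^ 2 * a ^ 2 := h1
      _ ≤ 9 * lam ^ 2 * ((S.card : ℝ) * ∑ j, v j ^ 2) :=
          mul_le_mul_of_nonneg_left hcs (by positivity)
      _ ≤ 9 * lam ^ 2 * ((S.card : ℝ) * (T / κ)) :=
          mul_le_mul_of_nonneg_left (mul_le_mul_of_nonneg_left h2 hsc) (by positivity)
      _ = 9 * lam ^ 2 * (S.card : ℝ) * (T / κ) := by ring
  rcases hT0.lt_or_eq with h0 | h0
  · have hfin : T * T ≤ T * (9 * lam ^ 2 * (S.card : ℝ) / κ) := by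
      calc T * T = T ^ 2 := (sq T).symm
        _ ≤ 9 * lam ^ 2 * (S.card:ℝ) * (T / κ) := hT2
        _ = T * (9 * lam ^ 2 * (S.card:ℝ) / κ) := by ring
    exact le_of_mul_le_mul_left hfin h0
  · rw [← h0]; positivity
end
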